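/- Let U : ℝ³ → M₂(ℂ) be continuous with values in SU(2), satisfy the odd (G-parity) reflection symmetry U(r x) = U(x)* for all x ∈ ℝ³, and converge to the identity at infinity: U(x) → I as ‖x‖ → ∞. Then U(x) = I for every x in the fixed plane P. -/

import Mathlib

open Matrix Filter

attribute [local instance] Matrix.frobeniusNormedAddCommGroup Matrix.frobeniusNormedSpace

/-- Reflection of `ℝ³` across the plane `{x₃ = 0}`: `(x₁, x₂, x₃) ↦ (x₁, x₂, -x₃)`. -/
def reflPlane : (Fin 3 → ℝ) → (Fin 3 → ℝ) := fun x i => if i = 2 then -x i else x i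

/-!
On the plane `P` the reflection symmetry makes `U x` Hermitian, so `U x * U x = 1`; together with
`det (U x) = 1`, Cayley–Hamilton forces `U x = ±1`. The plane is connected and `U` is continuous,
so the sign is constant on `P`; since `P` is unbounded and `U → 1` at infinity, the sign is `+`.
-/

theorem Matrix.mul_self_fin_two {R : Type*} [CommRing R] (M : Matrix (Fin 2) (Fin 2) R) :
    M * M = M.trace • M - M.det • 1 := by
  rw [eta_fin_two M]
  ext i j
  fin_cases i <;> fin_cases j <;> simp [trace_fin_two, det_fin_two] <;> ring

theorem Matrix.eq_one_or_eq_neg_one_of_mul_self_eq_one_of_det_eq_one {K : Type*} [Field K]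
    [NeZero (2 : K)] {M : Matrix (Fin 2) (Fin 2) K} (hM : M * M = 1) (hdet : M.det = 1) :
    M = 1 ∨ M = -1 := by
  have htr : M.trace • M = (2 : K) • 1 := by
    have h := M.mul_self_fin_two
    rw [hM, hdet, one_smul] at h
    rw [two_smul, eq_sub_iff_add_eq.1 h]
  have htr0 : M.trace ≠ 0 := by
    rintro h
    exact (two_ne_zero : (2 : K) ≠ 0) (by simpa [h] using (congrFun (congrFun htr 0) 0).symm)
  have hscalar : M = (2 / M.trace) • 1 := by
    rw [div_eq_inv_mul, mul_smul, ← htr, smul_smul, inv_mul_cancel₀ htr0, one_smul]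
  set c := 2 / M.trace
  have hc : c * c = 1 := by
    simpa [hscalar, smul_smul] using congrFun (congrFun hM 0) 0
  rcases mul_self_eq_one_iff.1 hc with h | h <;> simp [hscalar, h]

theorem tendsto_smul_const_atTop_cocompact {E : Type*} [NormedAddCommGroup E] [NormedSpace ℝ E]
    {v : E} (hv : v ≠ 0) : Tendsto (fun t : ℝ => t • v) atTop (cocompact E) :=
  tendsto_cocompact_of_tendsto_dist_comp_atTop 0 <| by
    simpa [norm_smul] using tendsto_abs_atTop_atTop.atTop_mul_const (norm_pos_iff.2 hv)

theorem reflPlane_eq_self {x : Fin 3 → ℝ} (hx : x 2 = 0) : reflPlane x = x := by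
  funext i
  by_cases hi : i = 2
  · simp [reflPlane, hi, hx]
  · simp [reflPlane, hi]

theorem isPreconnected_setOf_apply_two_eq_zero : IsPreconnected {x : Fin 3 → ℝ | x 2 = 0} :=
  (convex_hyperplane (LinearMap.proj (R := ℝ) (φ := fun _ : Fin 3 => ℝ) 2).isLinear 0).isPreconnected

theorem stmt8 (U : (Fin 3 → ℝ) → Matrix (Fin 2) (Fin 2) ℂ)
    (hSU : ∀ y, (U y)ᴴ * U y = 1 ∧ (U y).det = 1)
    (hcont : Continuous U)
    (hodd : ∀ x, U (reflPlane x) = (U x)ᴴ)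
    (hinfty : Tendsto U (cocompact (Fin 3 → ℝ)) (nhds 1)) :
    ∀ x, x 2 = 0 → U x = 1 := by
  intro x hx
  have hsign : Set.MapsTo U {y | y 2 = 0} {1, -1} := fun y hy => by
    have hherm : (U y)ᴴ = U y := by rw [← hodd, reflPlane_eq_self hy]
    have hsq : U y * U y = 1 := by simpa [hherm] using (hSU y).1
    exact eq_one_or_eq_neg_one_of_mul_self_eq_one_of_det_eq_one hsq (hSU y).2
  set e : Fin 3 → ℝ := Pi.single 0 1
  have hline : ∀ t : ℝ, U (t • e) = U x := fun t =>
    isPreconnected_setOf_apply_two_eq_zero.constant_of_mapsTo (Set.toFinite _).isDiscrete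
      hcont.continuousOn hsign (by simp [e]) hx
  have hlim : Tendsto (fun t : ℝ => U (t • e)) atTop (nhds 1) :=
    hinfty.comp (tendsto_smul_const_atTop_cocompact (by simp [e]))
  simp only [hline] at hlim
  exact tendsto_nhds_unique tendsto_const_nhds hlim
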